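/- If a and b are nonstandard elements of M and a E² b, then there is an order automorphism f : M ≃o M with f a = b (that is, a E⁵ b); in particular the initial segments {x : x < a} and {x : x < b} are order isomorphic. -/

import Mathlib

/-- `a` is a nonstandard element: above every natural number cast. -/
def Nonstd {M : Type*} [CommSemiring M] [LinearOrder M] [IsStrictOrderedRing M] (a : M) : Prop :=
  ∀ n : ℕ, (n : M) < a

def E0 {M : Type*} [CommSemiring M] [LinearOrder M] [IsStrictOrderedRing M] (a b : M) : Prop :=
  ∃ n : ℕ, a < b + (n : M) ∧ b < a + (n : M)

def E1 {M : Type*} [CommSemiring M] [LinearOrder M] [IsStrictOrderedRing M] (a b : M) : Prop :=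
  ∃ c : M, (∀ n : ℕ, (n : M) * c < a ∧ (n : M) * c < b) ∧ a < b + c ∧ b < a + c

def E2 {M : Type*} [CommSemiring M] [LinearOrder M] [IsStrictOrderedRing M] (a b : M) : Prop :=
  ∃ n : ℕ, a < (n : M) * b ∧ b < (n : M) * a

def E3 {M : Type*} [CommSemiring M] [LinearOrder M] [IsStrictOrderedRing M] (a b : M) : Prop :=
  ∃ c : M, (∀ n : ℕ, c ^ n < a ∧ c ^ n < b) ∧ a < b * c ∧ b < a * c

def E4 {M : Type*} [CommSemiring M] [LinearOrder M] [IsStrictOrderedRing M] (a b : M) : Prop :=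
  ∃ n : ℕ, a < b ^ n ∧ b < a ^ n

/-- `a E⁵ b`: some order automorphism of `M` maps `a` to `b`. -/
def E5 {M : Type*} [CommSemiring M] [LinearOrder M] [IsStrictOrderedRing M] (a b : M) : Prop :=
  ∃ f : M ≃o M, f a = b

/-- `E` is a convex equivalence relation on the nonstandard elements of `M`. -/
def IsConvexEquiv {M : Type*} [CommSemiring M] [LinearOrder M] [IsStrictOrderedRing M] (E : M → M → Prop) : Prop :=
  (∀ a : M, Nonstd a → E a a) ∧
  (∀ a b : M, Nonstd a → Nonstd b → E a b → E b a) ∧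
  (∀ a b c : M, Nonstd a → Nonstd b → Nonstd c → E a b → E b c → E a c) ∧
  (∀ a b c : M, Nonstd a → Nonstd b → Nonstd c → a ≤ b → b ≤ c → E a c → E a b)

/-- An almost `{<,+}`-isomorphism: an order isomorphism whose additivity error is finite. -/
def IsAlmostAddIso {M₁ M₂ : Type*} [CommSemiring M₁] [LinearOrder M₁] [IsStrictOrderedRing M₁]
    [CommSemiring M₂] [LinearOrder M₂] [IsStrictOrderedRing M₂] (f : M₁ ≃o M₂) : Prop :=
  ∀ a b : M₁, ∃ n : ℕ, f (a + b) < f a + f b + (n : M₂) ∧ f a + f b < f (a + b) + (n : M₂)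

/-- `M` is 2-order-rigid. -/
def OrderRigid2 (M : Type*) [CommSemiring M] [LinearOrder M] [IsStrictOrderedRing M] : Prop :=
  ∀ a b : M, Nonstd a → Nonstd b →
    Nonempty ({x : M // x < a} ≃o {x : M // x < b}) → E2 a b

/-- `M` is 3-order-rigid. -/
def OrderRigid3 (M : Type*) [CommSemiring M] [LinearOrder M] [IsStrictOrderedRing M] : Prop :=
  ∀ a b : M, Nonstd a → Nonstd b →
    Nonempty ({x : M // x < a} ≃o {x : M // x < b}) → E3 a b

/-- `M` is 4-order-rigid. -/
def OrderRigid4 (M : Type*) [CommSemiring M] [LinearOrder M] [IsStrictOrderedRing M] : Prop :=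
  ∀ a b : M, Nonstd a → Nonstd b →
    Nonempty ({x : M // x < a} ≃o {x : M // x < b}) → E4 a b

/-!
Write `b = a + c` with `c ≤ k a` (when `a ≤ b`; the other case is symmetric). Pick a
representative `ρ x` of every `E0`-class, with `ρ a = a` and `ρ x = 0` on the standard class.
The map `x ↦ x + min (k ρ x) c` translates each class by an amount that is monotone in the
class, so it is strictly increasing, and it sends `a` to `a + c`. It is onto: writing
`z = (k + 1) q + r`, the preimage of `z` is `z - k ρ q`, which lies in the class of `q`,
when `k ρ q ≤ c`, and `z - c` otherwise.
-/

section FiniteDistance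

variable {M : Type*} [CommSemiring M] [LinearOrder M] [IsStrictOrderedRing M] {x y z : M}

theorem E0.refl (x : M) : E0 x x :=
  ⟨1, by simp, by simp⟩

theorem E0.symm (h : E0 x y) : E0 y x :=
  let ⟨n, hxy, hyx⟩ := h
  ⟨n, hyx, hxy⟩

theorem E0.trans (hxy : E0 x y) (hyz : E0 y z) : E0 x z := by
  obtain ⟨n, h₁, h₂⟩ := hxy
  obtain ⟨m, h₃, h₄⟩ := hyz
  refine ⟨m + n, ?_, ?_⟩
  · calc x < y + n := h₁
      _ < z + m + n := by gcongr
      _ = z + ↑(m + n) := by push_cast; ring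
  · calc z < y + m := h₄
      _ < x + n + m := by gcongr
      _ = x + ↑(m + n) := by push_cast; ring

theorem E0_add_natCast (x : M) (n : ℕ) : E0 (x + n) x :=
  ⟨n + 1, by gcongr; exact_mod_cast n.lt_succ_self,
    lt_add_of_le_of_pos (le_add_of_nonneg_right n.cast_nonneg) (by positivity)⟩

theorem add_natCast_le_of_not_E0 (hxy : x ≤ y) (h : ¬E0 x y) (n : ℕ) : x + n ≤ y := by
  by_contra! hlt
  exact h ⟨n + 1, hxy.trans_lt (lt_add_of_pos_right y (by positivity)),
    hlt.trans_le (by gcongr; omega)⟩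

theorem Nonstd.not_E0_zero (hx : Nonstd x) : ¬E0 x 0 := fun ⟨n, hn, _⟩ =>
  (hx n).not_gt (by simpa using hn)

end FiniteDistance

section ClassRep

variable {M : Type*} [CommSemiring M] [LinearOrder M] [IsStrictOrderedRing M] {u x y : M}

noncomputable def classRep (u x : M) : M :=
  open Classical in
  if E0 x 0 then 0 else if E0 x u then u else Classical.epsilon (E0 · x)

theorem classRep_congr (h : E0 x y) : classRep u x = classRep u y := by
  have hzero : E0 x 0 ↔ E0 y 0 := ⟨h.symm.trans, h.trans⟩
  have hu : E0 x u ↔ E0 y u := ⟨h.symm.trans, h.trans⟩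
  have hclass : (E0 · x) = (E0 · y) := funext fun z => propext ⟨(·.trans h), (·.trans h.symm)⟩
  rw [classRep, classRep, propext hzero, propext hu, hclass]

theorem E0_classRep (u x : M) : E0 (classRep u x) x := by
  unfold classRep
  split_ifs with hzero hu
  · exact hzero.symm
  · exact hu.symm
  · exact Classical.epsilon_spec (p := (E0 · x)) ⟨x, E0.refl x⟩

theorem classRep_of_E0_zero (h : E0 x 0) : classRep u x = 0 := if_pos h

theorem classRep_self (hu : Nonstd u) : classRep u u = u := by
  rw [classRep, if_neg hu.not_E0_zero, if_pos (E0.refl u)]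

theorem classRep_mono (u : M) : Monotone (classRep u) := by
  intro x y hxy
  by_cases h : E0 x y
  · exact (classRep_congr h).le
  obtain ⟨m, hx, -⟩ := E0_classRep u x
  obtain ⟨n, -, hy⟩ := E0_classRep u y
  refine le_of_add_le_add_right (a := (n : M)) ?_
  calc classRep u x + n ≤ x + ↑(m + n) := by push_cast; rw [← add_assoc]; gcongr
    _ ≤ y := add_natCast_le_of_not_E0 hxy h _
    _ ≤ classRep u y + n := hy.le

end ClassRep

section ClassShift

variable {M : Type*} [CommSemiring M] [LinearOrder M] [IsStrictOrderedRing M] {u c z : M} {k : ℕ}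

noncomputable def classShift (u c : M) (k : ℕ) (x : M) : M :=
  x + min (k * classRep u x) c

theorem classShift_strictMono (u c : M) (k : ℕ) : StrictMono (classShift u c k) :=
  fun _ _ hxy => add_lt_add_of_lt_of_le hxy (by gcongr; exact classRep_mono u hxy.le)

theorem classShift_self (hu : Nonstd u) (hc : c ≤ k * u) : classShift u c k u = u + c := by
  rw [classShift, classRep_self hu, min_eq_right hc]

theorem classShift_of_E0_zero (h0 : ∀ x : M, 0 ≤ x) (hz : E0 z 0) : classShift u c k z = z := by
  rw [classShift, classRep_of_E0_zero hz, mul_zero, min_eq_left (h0 c), add_zero]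

theorem nonstd_of_eq_mul_add (h0 : ∀ x : M, 0 ≤ x) (hz : ¬E0 z 0) {q r : M}
    (hzqr : z = (k + 1 : ℕ) * q + r) (hr : r < (k + 1 : ℕ)) : Nonstd q := by
  intro n
  by_contra! hq
  have hbig := add_natCast_le_of_not_E0 (h0 z) (fun h => hz h.symm) ((k + 1) * (n + 1))
  refine hbig.not_gt ?_
  calc z = (k + 1 : ℕ) * q + r := hzqr
    _ < (k + 1 : ℕ) * n + (k + 1 : ℕ) := add_lt_add_of_le_of_lt (by gcongr) hr
    _ = 0 + ↑((k + 1) * (n + 1)) := by push_cast; ring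

theorem natCast_mul_classRep_le {q : M} (hq : Nonstd q)
    (hqz : (k + 1 : ℕ) * q ≤ z) : k * classRep u q ≤ z := by
  obtain ⟨N, hρq, -⟩ := E0_classRep u q
  calc (k : M) * classRep u q ≤ k * (q + N) := by gcongr
    _ = k * q + ↑(k * N) := by push_cast; ring
    _ ≤ k * q + q := by gcongr; exact (hq _).le
    _ = (k + 1 : ℕ) * q := by push_cast; ring
    _ ≤ z := hqz

theorem exists_classShift_eq_of_mul_classRep_le (h0 : ∀ x : M, 0 ≤ x)
    (hsub : ∀ a b : M, a ≤ b → ∃ c, b = a + c) {q r : M} (hq : Nonstd q)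
    (hzqr : z = (k + 1 : ℕ) * q + r) (hr : r < (k + 1 : ℕ)) (hcap : k * classRep u q ≤ c) :
    ∃ x, classShift u c k x = z := by
  have hqz : (k + 1 : ℕ) * q ≤ z := hzqr ▸ le_add_of_nonneg_right (h0 r)
  obtain ⟨x, rfl⟩ := hsub _ _ (natCast_mul_classRep_le (u := u) hq hqz)
  obtain ⟨N, hρq, hqρ⟩ := E0_classRep u q
  set ρ := classRep u q
  have hxq : E0 x q := by
    refine ⟨k * N + k + 1, lt_of_add_lt_add_left (a := (k : M) * ρ) ?_,
      lt_of_add_lt_add_left (a := (k : M) * ρ) ?_⟩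
    · calc (k : M) * ρ + x = q + k * q + r := by rw [hzqr]; push_cast; ring
        _ ≤ q + k * (ρ + N) + r := by gcongr
        _ < q + k * (ρ + N) + (k + 1 : ℕ) := by gcongr
        _ = k * ρ + (q + ↑(k * N + k + 1)) := by push_cast; ring
    · calc (k : M) * ρ + q ≤ k * (q + N) + q := by gcongr
        _ = (k + 1 : ℕ) * q + ↑(k * N) := by push_cast; ring
        _ ≤ k * ρ + x + ↑(k * N) := by gcongr
        _ < k * ρ + (x + ↑(k * N + k + 1)) := by rw [add_assoc]; gcongr; omega
  refine ⟨x, ?_⟩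
  rw [classShift, classRep_congr hxq, min_eq_left hcap, add_comm]

theorem exists_classShift_eq_of_lt_mul_classRep
    (hsub : ∀ a b : M, a ≤ b → ∃ c, b = a + c) {q : M} (hq : Nonstd q)
    (hqz : (k + 1 : ℕ) * q ≤ z) (hcap : c < k * classRep u q) :
    ∃ x, classShift u c k x = z := by
  obtain ⟨x, rfl⟩ := hsub c z (hcap.le.trans (natCast_mul_classRep_le hq hqz))
  obtain ⟨N, hρq, -⟩ := E0_classRep u q
  have hqx : q ≤ x + ↑(k * N) := by
    refine (lt_of_add_lt_add_left (a := c) ?_).le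
    calc c + q < k * classRep u q + q := by gcongr
      _ ≤ k * (q + N) + q := by gcongr
      _ = (k + 1 : ℕ) * q + ↑(k * N) := by push_cast; ring
      _ ≤ c + x + ↑(k * N) := by gcongr
      _ = c + (x + ↑(k * N)) := add_assoc _ _ _
  have hρx : classRep u q ≤ classRep u x :=
    (classRep_mono u hqx).trans_eq (classRep_congr (E0_add_natCast x _))
  refine ⟨x, ?_⟩
  rw [classShift, min_eq_right (hcap.le.trans (by gcongr)), add_comm]

theorem classShift_surjective (h0 : ∀ x : M, 0 ≤ x) (hsub : ∀ a b : M, a ≤ b → ∃ c, b = a + c)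
    (hdiv : ∀ (a : M) (n : ℕ), n ≠ 0 → ∃ q r : M, a = (n : M) * q + r ∧ r < (n : M))
    (u c : M) (k : ℕ) : Function.Surjective (classShift u c k) := by
  intro z
  by_cases hz : E0 z 0
  · exact ⟨z, classShift_of_E0_zero h0 hz⟩
  obtain ⟨q, r, hzqr, hr⟩ := hdiv z (k + 1) k.succ_ne_zero
  have hq : Nonstd q := nonstd_of_eq_mul_add h0 hz hzqr hr
  rcases le_or_gt (k * classRep u q) c with hcap | hcap
  · exact exists_classShift_eq_of_mul_classRep_le h0 hsub hq hzqr hr hcap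
  · exact exists_classShift_eq_of_lt_mul_classRep hsub hq
      (hzqr ▸ le_add_of_nonneg_right (h0 r)) hcap

end ClassShift

section E5

variable {M : Type*} [CommSemiring M] [LinearOrder M] [IsStrictOrderedRing M] {a b : M}

theorem E5.symm (h : E5 a b) : E5 b a :=
  let ⟨f, hf⟩ := h
  ⟨f.symm, f.symm_apply_eq.mpr hf.symm⟩

theorem E5_add_of_le_natCast_mul (h0 : ∀ x : M, 0 ≤ x) (hsub : ∀ a b : M, a ≤ b → ∃ c, b = a + c)
    (hdiv : ∀ (a : M) (n : ℕ), n ≠ 0 → ∃ q r : M, a = (n : M) * q + r ∧ r < (n : M))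
    {u c : M} {k : ℕ} (hu : Nonstd u) (hc : c ≤ k * u) : E5 u (u + c) :=
  ⟨(classShift_strictMono u c k).orderIsoOfSurjective _ (classShift_surjective h0 hsub hdiv u c k),
    classShift_self hu hc⟩

theorem E5_of_le_of_lt_natCast_mul (h0 : ∀ x : M, 0 ≤ x)
    (hsub : ∀ a b : M, a ≤ b → ∃ c, b = a + c)
    (hdiv : ∀ (a : M) (n : ℕ), n ≠ 0 → ∃ q r : M, a = (n : M) * q + r ∧ r < (n : M))
    (ha : Nonstd a) (hab : a ≤ b) {n : ℕ} (hb : b < n * a) : E5 a b := by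
  obtain ⟨c, rfl⟩ := hsub a b hab
  exact E5_add_of_le_natCast_mul h0 hsub hdiv ha (le_add_of_nonneg_left (h0 a) |>.trans hb.le)

theorem E5_of_E2 (h0 : ∀ x : M, 0 ≤ x) (hsub : ∀ a b : M, a ≤ b → ∃ c, b = a + c)
    (hdiv : ∀ (a : M) (n : ℕ), n ≠ 0 → ∃ q r : M, a = (n : M) * q + r ∧ r < (n : M))
    (ha : Nonstd a) (hb : Nonstd b) (hab : E2 a b) : E5 a b := by
  obtain ⟨n, hanb, hbna⟩ := hab
  rcases le_total a b with hle | hle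
  · exact E5_of_le_of_lt_natCast_mul h0 hsub hdiv ha hle hbna
  · exact (E5_of_le_of_lt_natCast_mul h0 hsub hdiv hb hle hanb).symm

end E5

def OrderIso.subtypeLt {α β : Type*} [Preorder α] [Preorder β] (f : α ≃o β) {a : α} {b : β}
    (hf : f a = b) : {x : α // x < a} ≃o {y : β // y < b} where
  toEquiv := f.toEquiv.subtypeEquiv fun x => by rw [← hf]; exact f.lt_iff_lt.symm
  map_rel_iff' := f.le_iff_le

/-- `a E² b` implies `a E⁵ b`, and in particular the initial segments
below `a` and below `b` are order isomorphic. -/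
theorem E2_implies_E5 {M : Type*} [CommSemiring M] [LinearOrder M] [IsStrictOrderedRing M]
    (h0 : ∀ x : M, 0 ≤ x)
    (hsub : ∀ a b : M, a ≤ b → ∃ c, b = a + c)
    (hdiv : ∀ (a : M) (n : ℕ), n ≠ 0 → ∃ q r : M, a = (n : M) * q + r ∧ r < (n : M))
    (a b : M) (ha : Nonstd a) (hb : Nonstd b) (hab : E2 a b) :
    (∃ f : M ≃o M, f a = b) ∧
      Nonempty ({x : M // x < a} ≃o {x : M // x < b}) := by
  obtain ⟨f, hf⟩ := E5_of_E2 h0 hsub hdiv ha hb hab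
  exact ⟨⟨f, hf⟩, ⟨f.subtypeLt hf⟩⟩
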